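/- arXiv:1511.06751 — 2 statements merged into one kernel-verified Lean document; each statement's English description precedes it below -/
import Mathlib

section
/- Let V ⊆ ℂⁿ, let Z = (z₁, …, z_S) be a finite list of points of V, and let v₁, …, v_D ∈ ℝ[x₁,…,xₙ] be polynomials that are linearly independent as functions on V, i.e., the only μ ∈ ℝ^D with Σᵢ μᵢ vᵢ vanishing identically on V is μ = 0. Let L be the real span of v₁, …, v_D, let U ∈ ℂ^{D×S} be the matrix with entries U_{i,s} = vᵢ(z_s), and let Û = [U | Ū] ∈ ℂ^{D×2S} be the block matrix whose last S columns are the entrywise complex conjugates of the columns of U. Then (L, Z) is poised if and only if the rank of Û over ℂ equals D. -/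
/-!
A complex row vector `μ` annihilates `[U | Ū]` iff both `μ` and `μ̄` annihilate `U`, i.e. iff
`Re μ` and `Im μ` do. So `[U | Ū]` has full row rank over `ℂ` iff the rows of `U` admit no
nontrivial real relation, and a real relation `g` among the rows of `U` is exactly a combination
`∑ gᵢ vᵢ` vanishing on `Z`; by the independence of the `vᵢ` on `V`, poisedness says that every
such combination is trivial.
-/

open MvPolynomial Matrix

theorem Matrix.rank_eq_card_iff_forall_vecMul_eq_zero {m n K : Type*} [Fintype m] [Fintype n]
    [Field K] (M : Matrix m n K) :
    M.rank = Fintype.card m ↔ ∀ μ : m → K, μ ᵥ* M = 0 → μ = 0 := by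
  rw [rank_eq_finrank_span_row, eq_comm, ← Set.finrank,
    ← linearIndependent_iff_card_eq_finrank_span, ← vecMul_injective_iff, ← coe_vecMulLinear,
    injective_iff_map_eq_zero]
  rfl

theorem Matrix.vecMul_fromCols_map_conj_eq_zero_iff {m n : Type*} [Fintype m]
    (M : Matrix m n ℂ) (μ : m → ℂ) :
    μ ᵥ* fromCols M (M.map (starRingEnd ℂ)) = 0 ↔ μ ᵥ* M = 0 ∧ star μ ᵥ* M = 0 := by
  have hconj : μ ᵥ* M.map (starRingEnd ℂ) = star (star μ ᵥ* M) := by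
    ext s
    simp [RingHom.map_vecMul, Function.comp_def]
  rw [vecMul_fromCols, hconj, ← Sum.elim_zero_zero, Sum.elim_eq_iff, star_eq_zero]

theorem Matrix.rank_fromCols_map_conj_eq_card_iff {m n : Type*} [Fintype m] [Fintype n]
    (M : Matrix m n ℂ) :
    (fromCols M (M.map (starRingEnd ℂ))).rank = Fintype.card m ↔
      ∀ g : m → ℝ, (Complex.ofReal ∘ g) ᵥ* M = 0 → g = 0 := by
  rw [rank_eq_card_iff_forall_vecMul_eq_zero]
  constructor
  · intro h g hg
    have := h (Complex.ofReal ∘ g) ((vecMul_fromCols_map_conj_eq_zero_iff M _).2 ⟨hg, by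
      rwa [show star (Complex.ofReal ∘ g) = Complex.ofReal ∘ g by ext; simp]⟩)
    ext i
    simpa using congrFun this i
  · intro h μ hμ
    obtain ⟨h₁, h₂⟩ := (vecMul_fromCols_map_conj_eq_zero_iff M μ).1 hμ
    have hre : Complex.ofReal ∘ (fun i => (μ i).re) = (2 : ℂ)⁻¹ • (μ + star μ) := by
      ext i; simp [Complex.re_eq_add_conj, div_eq_inv_mul]
    have him : Complex.ofReal ∘ (fun i => (μ i).im) = (2 * Complex.I)⁻¹ • (μ - star μ) := by
      ext i; simp [Complex.im_eq_sub_conj, div_eq_inv_mul]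
    have hre0 := h _ (by rw [hre, smul_vecMul, add_vecMul, h₁, h₂, add_zero, smul_zero])
    have him0 := h _ (by rw [him, smul_vecMul, sub_vecMul, h₁, h₂, sub_zero, smul_zero])
    ext i
    exact Complex.ext (congrFun hre0 i) (congrFun him0 i)

theorem MvPolynomial.aeval_sum_smul_eq_vecMul {σ ι κ : Type*} [Fintype ι] (z : κ → σ → ℂ)
    (v : ι → MvPolynomial σ ℝ) (g : ι → ℝ) :
    (fun s => aeval (z s) (∑ i, g i • v i)) =
      (Complex.ofReal ∘ g) ᵥ* Matrix.of fun i s => aeval (z s) (v i) := by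
  ext s
  simp [vecMul, dotProduct, Complex.real_smul]

theorem stmt_4_general {n D S : ℕ} (V : Set (Fin n → ℂ))
    (z : Fin S → (Fin n → ℂ))
    (v : Fin D → MvPolynomial (Fin n) ℝ)
    (hli : ∀ μ : Fin D → ℝ,
      (∀ x ∈ V, aeval x (∑ i, μ i • v i) = 0) → μ = 0)
    (U : Matrix (Fin D) (Fin S) ℂ) (hU : ∀ i s, U i s = aeval (z s) (v i)) :
    (∀ q ∈ Submodule.span ℝ (Set.range v),
        (∀ s, aeval (z s) q = 0) → ∀ x ∈ V, aeval x q = 0) ↔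
      (Matrix.fromCols U (U.map (starRingEnd ℂ))).rank = D := by
  obtain rfl : U = Matrix.of fun i s => aeval (z s) (v i) := Matrix.ext hU
  have hrank := rank_fromCols_map_conj_eq_card_iff (Matrix.of fun i s => aeval (z s) (v i))
  rw [Fintype.card_fin] at hrank
  rw [hrank]
  constructor
  · intro hpoised g hg
    rw [← aeval_sum_smul_eq_vecMul] at hg
    exact hli g <| hpoised _ (Submodule.sum_mem _ fun i _ =>
      Submodule.smul_mem _ _ (Submodule.subset_span ⟨i, rfl⟩)) (congrFun hg)
  · rintro hinj q hq hqz x -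
    obtain ⟨g, rfl⟩ := (Submodule.mem_span_range_iff_exists_fun ℝ).1 hq
    rw [hinj g (by rw [← aeval_sum_smul_eq_vecMul]; exact funext hqz)]
    simp

/-- poisedness is equivalent to the empirical dimension being `D`. -/
theorem stmt_4 {n D S : ℕ} (V : Set (Fin n → ℂ))
    (z : Fin S → (Fin n → ℂ)) (hzV : ∀ s, z s ∈ V)
    (v : Fin D → MvPolynomial (Fin n) ℝ)
    (hli : ∀ μ : Fin D → ℝ,
      (∀ x ∈ V, aeval x (∑ i, μ i • v i) = 0) → μ = 0)
    (U : Matrix (Fin D) (Fin S) ℂ) (hU : ∀ i s, U i s = aeval (z s) (v i)) :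
    (∀ q ∈ Submodule.span ℝ (Set.range v),
        (∀ s, aeval (z s) q = 0) → ∀ x ∈ V, aeval x q = 0) ↔
      (Matrix.fromCols U (U.map (starRingEnd ℂ))).rank = D :=
  stmt_4_general V z v hli U hU
end

section
/- Let W ⊆ ℂⁿ be an irreducible variety, let V = W ∪ W̄, and let v₁, …, v_D ∈ ℝ[x₁,…,xₙ] be linearly independent as functions on V (the only μ ∈ ℝ^D with Σᵢ μᵢ vᵢ vanishing identically on V is μ = 0). Let S be an integer with 2S ≤ D. Then there exists a polynomial Q in 2·S·n complex variables such that: (i) there exist z₁, …, z_S ∈ W with Q(z₁, …, z_S, z̄₁, …, z̄_S) ≠ 0; and (ii) for every z₁, …, z_S ∈ W with Q(z₁, …, z_S, z̄₁, …, z̄_S) ≠ 0, the D×2S matrix Û whose first S columns are (vᵢ(z_s))ᵢ and whose last S columns are (vᵢ(z̄_s))ᵢ has rank 2S over ℂ. -/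
/-!
Take `Q` to be the Gram determinant `det (Ûᴴ Û)` of the sample matrix `Û`, written as a
polynomial in the samples and their conjugates. Then `Q(z) ≠ 0` exactly when the columns of
`Û(z)` are linearly independent, and it remains to find one good tuple of samples.

Since the `vᵢ` are real, the columns `v(z), v(z̄)` are independent over `ℂ` as soon as the real
vectors `Re v(z), Im v(z)` are independent over `ℝ`, and samples can be chosen greedily: it suffices
that for every subspace `U ⊆ ℝᴰ` of codimension at least two some `z ∈ W` has `Re v(z), Im v(z)`
independent modulo `U`. Otherwise, for any two functionals `φ, ψ` vanishing on `U`, the ratio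
`h = ψ(v) / φ(v)` is real wherever it is defined on `W`. Such a rational function on an
irreducible variety is constant: if it were transcendental over `ℂ`, the Nullstellensatz would
make every `(h - c)⁻¹`, `c ∉ ℝ`, a regular function on `W ∩ {φ(v) ≠ 0}`, giving uncountably many
linearly independent elements of a space of countable dimension. Hence `ψ(v) = c φ(v)` on `W`, so
on `W ∪ W̄`, and independence of the `vᵢ` gives `ψ = c φ`, which is impossible since the annihilator
of `U` has dimension at least two.
-/

open MvPolynomial

/-- Coordinatewise complex conjugation of a point of `ℂⁿ`. -/
noncomputable def conjPt {n : ℕ} (z : Fin n → ℂ) : Fin n → ℂ :=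
  fun i => (starRingEnd ℂ) (z i)

/-- Evaluation of a polynomial `Q` in the `2·S·n` variables
`z₁,…,z_S, z̄₁,…,z̄_S` at a tuple of samples `z`. -/
noncomputable def evalSamples {n S : ℕ}
    (Q : MvPolynomial ((Fin S ⊕ Fin S) × Fin n) ℂ)
    (z : Fin S → Fin n → ℂ) : ℂ :=
  MvPolynomial.eval
    (fun p => Sum.elim (fun s => z s p.2) (fun s => conjPt (z s) p.2) p.1) Q

section LinearAlgebra

variable {K E α : Type*} [Field K] [AddCommGroup E] [Module K E]

theorem LinearIndependent.sum_elim_add_smul_sub_smul {ι : Type*} [Fintype ι] {a b : ι → E}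
    (h : LinearIndependent K (Sum.elim a b)) {c : K} (hc : c ≠ 0) (h2 : (2 : K) ≠ 0) :
    LinearIndependent K (Sum.elim (fun t => a t + c • b t) (fun t => a t - c • b t)) := by
  rw [Fintype.linearIndependent_iff] at h ⊢
  intro g hg
  have key := h
    (Sum.elim (fun t => g (.inl t) + g (.inr t)) fun t => c * (g (.inl t) - g (.inr t))) (by
      rw [← hg]
      simp only [Fintype.sum_sum_type, Sum.elim_inl, Sum.elim_inr, smul_add, smul_sub, add_smul,
        sub_smul, mul_smul, Finset.sum_add_distrib, Finset.sum_sub_distrib, smul_comm c]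
      abel)
  have hsum (t) : g (.inl t) + g (.inr t) = 0 := key (.inl t)
  have hdiff (t) : g (.inl t) - g (.inr t) = 0 := (mul_eq_zero.mp (key (.inr t))).resolve_left hc
  rintro (t | t)
  · exact (mul_eq_zero.mp (by linear_combination hsum t + hdiff t :
      (2 : K) * g (.inl t) = 0)).resolve_left h2
  · exact (mul_eq_zero.mp (by linear_combination hsum t - hdiff t :
      (2 : K) * g (.inr t) = 0)).resolve_left h2

theorem LinearIndependent.sum_elim_comp_cons {a b : α → E} {m : ℕ} {z : Fin m → α} {x : α}
    (hz : LinearIndependent K (Sum.elim (a ∘ z) (b ∘ z)))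
    (hx : ∀ r s : K, r • a x + s • b x ∈ Submodule.span K (Set.range (Sum.elim (a ∘ z) (b ∘ z))) →
      r = 0 ∧ s = 0) :
    LinearIndependent K (Sum.elim (a ∘ Fin.cons x z) (b ∘ Fin.cons x z)) := by
  rw [Fintype.linearIndependent_iff] at hz ⊢
  intro g hg
  set g' := g ∘ Sum.map Fin.succ Fin.succ
  set tail := ∑ p, g' p • Sum.elim (a ∘ z) (b ∘ z) p
  have hsplit : g (.inl 0) • a x + g (.inr 0) • b x = -tail := by
    rw [eq_neg_iff_add_eq_zero, ← hg]
    simp only [tail, g', Fintype.sum_sum_type, Fin.sum_univ_succ, Function.comp_apply,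
      Sum.elim_inl, Sum.elim_inr, Sum.map_inl, Sum.map_inr, Fin.cons_zero, Fin.cons_succ]
    abel
  have htail : tail ∈ Submodule.span K (Set.range (Sum.elim (a ∘ z) (b ∘ z))) :=
    Submodule.sum_mem _ fun p _ =>
      Submodule.smul_mem _ _ (Submodule.subset_span (Set.mem_range_self p))
  obtain ⟨h0, h0'⟩ := hx _ _ (hsplit ▸ neg_mem htail)
  have hg' := hz g' (by rw [← neg_eq_zero, ← hsplit, h0, h0', zero_smul, zero_smul, add_zero])
  rintro (t | t) <;> cases t using Fin.cases
  exacts [h0, hg' (.inl _), h0', hg' (.inr _)]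

theorem exists_linearIndependent_sum_elim [FiniteDimensional K E] (a b : α → E) (T : Set α)
    (h : ∀ U : Submodule K E, Module.finrank K U + 2 ≤ Module.finrank K E →
      ∃ x ∈ T, ∀ r s : K, r • a x + s • b x ∈ U → r = 0 ∧ s = 0)
    {S : ℕ} (hS : 2 * S ≤ Module.finrank K E) :
    ∃ z : Fin S → α, (∀ s, z s ∈ T) ∧ LinearIndependent K (Sum.elim (a ∘ z) (b ∘ z)) := by
  induction S with
  | zero => exact ⟨Fin.elim0, fun s => s.elim0, linearIndependent_empty_type⟩
  | succ s ih =>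
    obtain ⟨z, hzT, hz⟩ := ih (by omega)
    have hrank :
        Module.finrank K (Submodule.span K (Set.range (Sum.elim (a ∘ z) (b ∘ z)))) = 2 * s := by
      rw [finrank_span_eq_card hz, Fintype.card_sum, Fintype.card_fin, two_mul]
    obtain ⟨x, hxT, hx⟩ := h _ (by rw [hrank]; omega)
    exact ⟨Fin.cons x z, Fin.cases hxT hzT, hz.sum_elim_comp_cons hx⟩

theorem Module.Dual.mul_sub_mul_eq_zero_of_apply_eq_zero (φ ψ : Module.Dual K E) {x y : E}
    {r s : K} (hrs : ¬(r = 0 ∧ s = 0)) (hφ : φ (r • x + s • y) = 0)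
    (hψ : ψ (r • x + s • y) = 0) : φ x * ψ y - φ y * ψ x = 0 := by
  simp only [map_add, map_smul, smul_eq_mul] at hφ hψ
  rcases eq_or_ne r 0 with hr | hr
  · exact (mul_eq_zero.mp (by linear_combination φ x * hψ - ψ x * hφ :
      s * (φ x * ψ y - φ y * ψ x) = 0)).resolve_left fun hs => hrs ⟨hr, hs⟩
  · exact (mul_eq_zero.mp (by linear_combination ψ y * hφ - φ y * hψ :
      r * (φ x * ψ y - φ y * ψ x) = 0)).resolve_left hr

end LinearAlgebra

theorem LinearIndependent.sum_elim_star_of_re_im {ι κ : Type*} [Fintype ι] [Finite κ]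
    {u : ι → κ → ℂ}
    (h : LinearIndependent ℝ (Sum.elim (fun t i => (u t i).re) (fun t i => (u t i).im))) :
    LinearIndependent ℂ (Sum.elim u (fun t i => starRingEnd ℂ (u t i))) := by
  have h' := (linearIndependent_algebraMap_comp_iff (S := ℂ)).mpr h
  have hfam : (fun p => algebraMap ℝ ℂ ∘ Sum.elim (fun t i => (u t i).re)
      (fun t i => (u t i).im) p) =
        Sum.elim (fun t i => ((u t i).re : ℂ)) (fun t i => (u t i).im) := by
    ext (t | t) i <;> rfl
  rw [hfam] at h'
  have hu : Sum.elim u (fun t i => starRingEnd ℂ (u t i)) =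
      Sum.elim (fun t i => ((u t i).re : ℂ) + Complex.I • ((u t i).im : ℂ))
        (fun t i => ((u t i).re : ℂ) - Complex.I • ((u t i).im : ℂ)) := by
    ext (t | t) i <;> apply Complex.ext <;> simp
  rw [hu]
  exact h'.sum_elim_add_smul_sub_smul Complex.I_ne_zero two_ne_zero

theorem Matrix.det_conjTranspose_mul_self_ne_zero_iff {m n R : Type*} [Fintype m] [Fintype n]
    [DecidableEq n] [Field R] [PartialOrder R] [StarRing R] [StarOrderedRing R]
    (A : Matrix m n R) : (A.conjTranspose * A).det ≠ 0 ↔ LinearIndependent R A.col := by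
  rw [← Matrix.mulVec_injective_iff, ← Matrix.coe_mulVecLin, ← LinearMap.ker_eq_bot,
    ← ker_mulVecLin_conjTranspose_mul_self, Matrix.ker_mulVecLin_eq_bot_iff, Ne,
    ← Matrix.exists_mulVec_eq_zero_iff]
  simp only [not_exists, not_and]
  exact forall_congr' fun _ => not_imp_not

theorem MvPolynomial.exists_forall_eval_eq_zero_of_one_notMem_span {K σ : Type*} [Field K]
    [IsAlgClosed K] [Finite σ] {S : Set (MvPolynomial σ K)} (h : 1 ∉ Ideal.span S) :
    ∃ x : σ → K, ∀ p ∈ S, eval x p = 0 := by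
  by_contra! hS
  have hempty : zeroLocus K (Ideal.span S) = ∅ := by
    simpa [zeroLocus_span, Set.eq_empty_iff_forall_notMem] using hS
  have hrad := vanishingIdeal_zeroLocus_eq_radical (K := K) (Ideal.span S)
  rw [hempty, vanishingIdeal_empty, eq_comm, Ideal.radical_eq_top] at hrad
  exact h (hrad ▸ Submodule.mem_top)

theorem MvPolynomial.rank_range_le_aleph0 {K L σ : Type*} [Field K] [Ring L] [Algebra K L]
    [Countable σ] (Ψ : MvPolynomial σ K →ₐ[K] L) :
    Module.rank K (LinearMap.range Ψ.toLinearMap) ≤ Cardinal.aleph0 := by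
  have h := lift_rank_range_le Ψ.toLinearMap
  rw [MvPolynomial.rank_eq_lift, Cardinal.lift_lift] at h
  rw [← Cardinal.lift_le_aleph0]
  exact h.trans (Cardinal.lift_le_aleph0.mpr (Cardinal.mk_le_aleph0_iff.mpr inferInstance))

theorem Transcendental.countable_setOf_inv_sub_mem {F E : Type*} [Field F] [Field E]
    [Algebra F E] {x : E} (hx : Transcendental F x) {M : Submodule F E}
    (hM : Module.rank F M ≤ Cardinal.aleph0) :
    {c : F | (x - algebraMap F E c)⁻¹ ∈ M}.Countable := by
  have hli : LinearIndependent F fun c : {c : F | (x - algebraMap F E c)⁻¹ ∈ M} =>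
      (⟨_, c.2⟩ : M) :=
    .of_comp M.subtype (hx.linearIndependent_sub_inv.comp _ Subtype.val_injective)
  have := hli.cardinal_lift_le_rank.trans (Cardinal.lift_le_aleph0.mpr hM)
  rwa [Cardinal.lift_le_aleph0, Cardinal.mk_le_aleph0_iff, Set.countable_coe_iff] at this

theorem exists_eq_algebraMap_mul_of_not_countable {K L σ : Type*} [Field K] [IsAlgClosed K]
    [Field L] [Algebra K L] [Finite σ] (χ : MvPolynomial σ K →ₐ[K] L)
    {F G : MvPolynomial σ K} (hF : χ F ≠ 0) {A : Set K} (hA : ¬ A.Countable)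
    (h : ∀ c ∈ A, ∀ x : σ → K, (∀ p ∈ RingHom.ker χ, eval x p = 0) → eval x F ≠ 0 →
      eval x G ≠ c * eval x F) :
    ∃ c, χ G = algebraMap K L c * χ F := by
  by_cases hr : Transcendental K (χ G / χ F)
  · refine absurd ?_ hA
    let Ψ : MvPolynomial (Option σ) K →ₐ[K] L := aeval fun o => o.elim (χ F)⁻¹ fun i => χ (X i)
    have hΨ : Ψ.comp (rename some) = χ := by ext i; simp [Ψ]
    have hΨX : Ψ (X none) = (χ F)⁻¹ := by simp [Ψ]
    refine (hr.countable_setOf_inv_sub_mem (rank_range_le_aleph0 Ψ)).mono fun c hc => ?_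
    -- Rabinowitsch's ideal of the locus `{x ∈ Z(ker χ) | F x ≠ 0 ∧ G x = c * F x}`
    set J := Ideal.span (rename some '' (RingHom.ker χ : Set (MvPolynomial σ K)) ∪
      {X none * rename some F - 1, rename some (G - C c * F)})
    have hJ : 1 ∈ J := by
      by_contra hJ
      obtain ⟨x, hx⟩ := exists_forall_eval_eq_zero_of_one_notMem_span hJ
      refine h c hc (x ∘ some) (fun p hp => ?_) (fun h0 => ?_) ?_
      · simpa [eval_rename] using hx _ (.inl ⟨p, hp, rfl⟩)
      · simpa [eval_rename, h0] using hx _ (.inr (.inl rfl))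
      · simpa [eval_rename, sub_eq_zero] using hx _ (.inr (.inr rfl))
    have hle : J ≤ RingHom.ker Ψ ⊔ Ideal.span {rename some (G - C c * F)} := by
      rw [Ideal.span_le]
      rintro _ (⟨p, hp, rfl⟩ | rfl | rfl)
      · exact Ideal.mem_sup_left (by simpa [RingHom.mem_ker, ← AlgHom.comp_apply, hΨ] using hp)
      · exact Ideal.mem_sup_left (by simp [hΨX, ← AlgHom.comp_apply, hΨ, hF])
      · exact Ideal.mem_sup_right (Ideal.subset_span rfl)
    obtain ⟨k, hk, u, hu, hku⟩ := Submodule.mem_sup.mp (hle hJ)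
    obtain ⟨t, rfl⟩ := Ideal.mem_span_singleton'.mp hu
    have hinv : Ψ t * (χ G - algebraMap K L c * χ F) = 1 := by
      simpa [← AlgHom.comp_apply, hΨ, (RingHom.mem_ker).mp hk] using congrArg Ψ hku
    refine ⟨rename some F * t, ?_⟩
    show Ψ (rename some F * t) = _
    rw [map_mul, ← AlgHom.comp_apply, hΨ]
    refine eq_inv_of_mul_eq_one_left ?_
    rw [← hinv]
    field_simp
  · have hdeg := IsAlgClosed.degree_eq_one_of_irreducible K
      (minpoly.irreducible (not_not.mp hr).isIntegral)
    obtain ⟨c, hc⟩ := minpoly.mem_range_of_degree_eq_one _ _ hdeg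
    exact ⟨c, by rw [hc, div_mul_cancel₀ _ hF]⟩

theorem isPrime_vanishingIdeal_of_nonempty {k σ : Type*} [Field k] {W : Set (σ → k)}
    (hW : W.Nonempty)
    (hprime : ∀ f g : MvPolynomial σ k, (∀ w ∈ W, eval w (f * g) = 0) →
      (∀ w ∈ W, eval w f = 0) ∨ (∀ w ∈ W, eval w g = 0)) :
    (vanishingIdeal k W).IsPrime where
  ne_top' h := by
    obtain ⟨w, hw⟩ := hW
    simpa using (h ▸ Submodule.mem_top : (1 : MvPolynomial σ k) ∈ vanishingIdeal k W) w hw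
  mem_or_mem' := hprime _ _

theorem exists_real_ratio_of_im_conj_mul_eq_zero {σ : Type*} [Finite σ] {W : Set (σ → ℂ)}
    [(vanishingIdeal ℂ W).IsPrime] (hW : ∀ x, (∀ p ∈ vanishingIdeal ℂ W, eval x p = 0) → x ∈ W)
    {F G : MvPolynomial σ ℂ} (hF : ∃ z ∈ W, eval z F ≠ 0)
    (hFG : ∀ z ∈ W, (starRingEnd ℂ (eval z F) * eval z G).im = 0) :
    ∃ c : ℝ, ∀ z ∈ W, eval z G = c * eval z F := by
  set P := vanishingIdeal ℂ W
  let χ : MvPolynomial σ ℂ →ₐ[ℂ] FractionRing (MvPolynomial σ ℂ ⧸ P) :=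
    (IsScalarTower.toAlgHom ℂ _ _).comp (Ideal.Quotient.mkₐ ℂ P)
  have hker : RingHom.ker χ = P := by
    ext p
    simp [χ, RingHom.mem_ker, Ideal.Quotient.eq_zero_iff_mem]
  have him (a c : ℂ) : (starRingEnd ℂ a * (c * a)).im = c.im * Complex.normSq a := by
    simp [Complex.normSq_apply]; ring
  have hA : ¬ {c : ℂ | c.im ≠ 0}.Countable := fun hA => Cardinal.not_countable_real <| by
    simpa using hA.preimage (f := fun r : ℝ => r + Complex.I)
      fun a b hab => by simpa using congrArg Complex.re hab
  obtain ⟨z₀, hz₀, hFz₀⟩ := hF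
  have hχF : χ F ≠ 0 := fun h0 => hFz₀ <| by
    have : F ∈ P := hker ▸ h0
    simpa using this z₀ hz₀
  obtain ⟨c, hc⟩ := exists_eq_algebraMap_mul_of_not_countable χ (G := G) hχF hA
    fun c hc x hx hFx hGx => hc <| by
      have := hFG x (hW x (hker ▸ hx))
      rwa [hGx, him, mul_eq_zero, Complex.normSq_eq_zero, or_iff_left hFx] at this
  have hGF : ∀ z ∈ W, eval z G = c * eval z F := by
    have hmem : G - C c * F ∈ P := hker ▸ by simp [RingHom.mem_ker, hc]
    intro z hz
    simpa [sub_eq_zero] using hmem z hz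
  have hcim : c.im = 0 := by
    have := hFG z₀ hz₀
    rwa [hGF z₀ hz₀, him, mul_eq_zero, Complex.normSq_eq_zero, or_iff_left hFz₀] at this
  exact ⟨c.re, fun z hz => by rw [hGF z hz, ← Complex.re_add_im c, hcim]; simp⟩

section DualPoly
variable {σ ι : Type*} [Fintype ι] (v : ι → MvPolynomial σ ℝ)

noncomputable def dualPoly (φ : Module.Dual ℝ (ι → ℝ)) : MvPolynomial σ ℝ :=
  ∑ i, φ (Pi.basisFun ℝ ι i) • v i

theorem aeval_dualPoly (z : σ → ℂ) (φ : Module.Dual ℝ (ι → ℝ)) :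
    aeval z (dualPoly v φ) =
      φ (fun i => (aeval z (v i)).re) + φ (fun i => (aeval z (v i)).im) * Complex.I := by
  have hφ (x : ι → ℝ) : φ x = ∑ i, x i * φ (Pi.basisFun ℝ ι i) := by
    conv_lhs => rw [← (Pi.basisFun ℝ ι).sum_repr x]
    simp [map_sum]
  rw [hφ (fun i => _), hφ (fun i => _)]
  apply Complex.ext <;> simp [dualPoly, Complex.real_smul, mul_comm]

theorem im_conj_aeval_dualPoly_mul (z : σ → ℂ) (φ ψ : Module.Dual ℝ (ι → ℝ)) :
    (starRingEnd ℂ (aeval z (dualPoly v φ)) * aeval z (dualPoly v ψ)).im =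
      φ (fun i => (aeval z (v i)).re) * ψ (fun i => (aeval z (v i)).im) -
        φ (fun i => (aeval z (v i)).im) * ψ (fun i => (aeval z (v i)).re) := by
  simp only [aeval_dualPoly, Complex.mul_im, Complex.conj_re, Complex.conj_im, Complex.add_re,
    Complex.add_im, Complex.ofReal_re, Complex.ofReal_im, Complex.mul_re, Complex.I_re,
    Complex.I_im]
  ring

end DualPoly

theorem exists_mem_re_im_independent_mod {σ ι : Type*} [Finite σ] [Fintype ι]
    {W : Set (σ → ℂ)} [(vanishingIdeal ℂ W).IsPrime]
    (hW : ∀ x, (∀ p ∈ vanishingIdeal ℂ W, eval x p = 0) → x ∈ W)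
    {v : ι → MvPolynomial σ ℝ}
    (hli : ∀ μ : ι → ℝ, (∀ x ∈ W, aeval x (∑ i, μ i • v i) = 0) → μ = 0)
    (U : Submodule ℝ (ι → ℝ)) (hU : Module.finrank ℝ U + 2 ≤ Module.finrank ℝ (ι → ℝ)) :
    ∃ z ∈ W, ∀ r s : ℝ,
      r • (fun i => (aeval z (v i)).re) + s • (fun i => (aeval z (v i)).im) ∈ U →
        r = 0 ∧ s = 0 := by
  by_contra! hbad
  have hA : 2 ≤ Module.finrank ℝ U.dualAnnihilator := by
    have := Subspace.finrank_add_finrank_dualAnnihilator_eq U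
    omega
  have hinj (φ : Module.Dual ℝ (ι → ℝ)) (hφ : ∀ z ∈ W, aeval z (dualPoly v φ) = 0) : φ = 0 :=
    (Pi.basisFun ℝ ι).ext fun i => by simpa using congrFun (hli _ hφ) i
  have hreal : ∀ φ ∈ U.dualAnnihilator, ∀ ψ ∈ U.dualAnnihilator, ∀ z ∈ W,
      (starRingEnd ℂ (aeval z (dualPoly v φ)) * aeval z (dualPoly v ψ)).im = 0 := by
    intro φ hφ ψ hψ z hz
    obtain ⟨r, s, hmem, hrs⟩ := hbad z hz
    rw [im_conj_aeval_dualPoly_mul]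
    exact φ.mul_sub_mul_eq_zero_of_apply_eq_zero ψ (fun h => hrs h.1 h.2)
      ((Submodule.mem_dualAnnihilator φ).mp hφ _ hmem)
      ((Submodule.mem_dualAnnihilator ψ).mp hψ _ hmem)
  obtain ⟨φ, hφA, hφ0⟩ := Submodule.exists_mem_ne_zero_of_ne_bot
    fun h : U.dualAnnihilator = ⊥ => by rw [h, finrank_bot] at hA; omega
  have hev (z : σ → ℂ) (p : MvPolynomial σ ℝ) : eval z (map (algebraMap ℝ ℂ) p) = aeval z p :=
    aeval_map_algebraMap ℂ z p
  have hle : U.dualAnnihilator ≤ ℝ ∙ φ := by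
    intro ψ hψ
    obtain ⟨c, hc⟩ := exists_real_ratio_of_im_conj_mul_eq_zero hW
      (F := map (algebraMap ℝ ℂ) (dualPoly v φ)) (G := map (algebraMap ℝ ℂ) (dualPoly v ψ))
      (by by_contra! h; exact hφ0 (hinj φ fun z hz => by simpa [hev] using h z hz))
      (by simpa only [hev] using hreal φ hφA ψ hψ)
    refine Submodule.mem_span_singleton.mpr ⟨c, (sub_eq_zero.mp (hinj _ fun z hz => ?_)).symm⟩
    have := hc z hz
    simp only [hev, aeval_dualPoly] at this
    simp only [aeval_dualPoly, LinearMap.sub_apply, LinearMap.smul_apply, smul_eq_mul]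
    push_cast
    linear_combination this
  have := Submodule.finrank_mono hle
  rw [finrank_span_singleton hφ0] at this
  omega

theorem aeval_conjPt {n : ℕ} (z : Fin n → ℂ) (p : MvPolynomial (Fin n) ℝ) :
    aeval (conjPt z) p = starRingEnd ℂ (aeval z p) :=
  (comp_aeval_apply (f := z) Complex.conjAe.toAlgHom p).symm

section Samples
variable {n D S : ℕ} (v : Fin D → MvPolynomial (Fin n) ℝ)

noncomputable def sampleMatrix (z : Fin S → Fin n → ℂ) : Matrix (Fin D) (Fin S ⊕ Fin S) ℂ :=
  Matrix.fromCols (Matrix.of fun i s => aeval (z s) (v i))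
    (Matrix.of fun i s => aeval (conjPt (z s)) (v i))

noncomputable def samplePoly (i : Fin D) (c : Fin S ⊕ Fin S) :
    MvPolynomial ((Fin S ⊕ Fin S) × Fin n) ℂ :=
  rename (fun j => (c, j)) (map (algebraMap ℝ ℂ) (v i))

noncomputable def gramPoly : MvPolynomial ((Fin S ⊕ Fin S) × Fin n) ℂ :=
  (Matrix.of fun c c' => ∑ i, samplePoly v i c.swap * samplePoly v i c').det

theorem evalSamples_samplePoly (z : Fin S → Fin n → ℂ) (i : Fin D) (c : Fin S ⊕ Fin S) :
    evalSamples (samplePoly v i c) z = sampleMatrix v z i c := by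
  rw [evalSamples, samplePoly, eval_rename, ← aeval_eq_eval, aeval_map_algebraMap]
  rcases c with s | s <;> rfl

theorem sampleMatrix_swap (z : Fin S → Fin n → ℂ) (i : Fin D) (c : Fin S ⊕ Fin S) :
    sampleMatrix v z i c.swap = star (sampleMatrix v z i c) := by
  rcases c with s | s <;>
    simp only [sampleMatrix, Sum.swap_inl, Sum.swap_inr, Matrix.fromCols_apply_inl,
      Matrix.fromCols_apply_inr, Matrix.of_apply, aeval_conjPt, Complex.star_def,
      Complex.conj_conj]

theorem evalSamples_gramPoly (z : Fin S → Fin n → ℂ) :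
    evalSamples (gramPoly v) z =
      ((sampleMatrix v z).conjTranspose * sampleMatrix v z).det := by
  rw [evalSamples, gramPoly, RingHom.map_det]
  congr 1
  ext c c'
  simp only [RingHom.mapMatrix_apply, Matrix.map_apply, Matrix.of_apply, map_sum, map_mul,
    Matrix.mul_apply, Matrix.conjTranspose_apply]
  simp only [← evalSamples.eq_1, evalSamples_samplePoly, sampleMatrix_swap]

theorem sampleMatrix_col (z : Fin S → Fin n → ℂ) :
    (sampleMatrix v z).col = Sum.elim (fun s i => aeval (z s) (v i))
      (fun s i => starRingEnd ℂ (aeval (z s) (v i))) := by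
  ext (s | s) i <;> simp [sampleMatrix, aeval_conjPt]

end Samples

open scoped ComplexOrder

/-- when `2S ≤ D`, generic samples give an evaluation matrix of
full column rank `2S`. -/
theorem stmt_8 {n D S : ℕ} (W : Set (Fin n → ℂ))
    (hWne : W.Nonempty)
    (hWcl : W = {x | ∀ f : MvPolynomial (Fin n) ℂ,
      (∀ w ∈ W, eval w f = 0) → eval x f = 0})
    (hWprime : ∀ f g : MvPolynomial (Fin n) ℂ,
      (∀ w ∈ W, eval w (f * g) = 0) →
        (∀ w ∈ W, eval w f = 0) ∨ (∀ w ∈ W, eval w g = 0))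
    (V : Set (Fin n → ℂ)) (hV : V = W ∪ conjPt '' W)
    (v : Fin D → MvPolynomial (Fin n) ℝ)
    (hli : ∀ μ : Fin D → ℝ,
      (∀ x ∈ V, aeval x (∑ i, μ i • v i) = 0) → μ = 0)
    (hS : 2 * S ≤ D) :
    ∃ Q : MvPolynomial ((Fin S ⊕ Fin S) × Fin n) ℂ,
      (∃ z : Fin S → Fin n → ℂ, (∀ s, z s ∈ W) ∧ evalSamples Q z ≠ 0) ∧
      (∀ z : Fin S → Fin n → ℂ, (∀ s, z s ∈ W) → evalSamples Q z ≠ 0 →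
        (Matrix.fromCols
          (Matrix.of fun i s => (aeval (z s) (v i) : ℂ))
          (Matrix.of fun i s => (aeval (conjPt (z s)) (v i) : ℂ))).rank = 2 * S) := by
  have := isPrime_vanishingIdeal_of_nonempty hWne hWprime
  have hcl : ∀ x, (∀ p ∈ vanishingIdeal ℂ W, eval x p = 0) → x ∈ W := fun x hx => by
    rw [hWcl]; exact hx
  have hliW : ∀ μ : Fin D → ℝ, (∀ x ∈ W, aeval x (∑ i, μ i • v i) = 0) → μ = 0 := by
    refine fun μ hμ => hli μ ?_
    rw [hV]
    rintro _ (hx | ⟨x, hx, rfl⟩)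
    exacts [hμ _ hx, by rw [aeval_conjPt, hμ x hx, map_zero]]
  obtain ⟨z, hzW, hz⟩ := exists_linearIndependent_sum_elim _ _ W
    (fun U hU => exists_mem_re_im_independent_mod hcl hliW U hU)
    (hS.trans_eq (Module.finrank_fin_fun ℝ).symm)
  refine ⟨gramPoly v, ⟨z, hzW, ?_⟩, fun z _ hQ => ?_⟩
  · rw [evalSamples_gramPoly, Matrix.det_conjTranspose_mul_self_ne_zero_iff, sampleMatrix_col]
    exact hz.sum_elim_star_of_re_im
  · rw [evalSamples_gramPoly, Matrix.det_conjTranspose_mul_self_ne_zero_iff] at hQ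
    rw [← sampleMatrix, Matrix.rank_eq_finrank_span_cols, finrank_span_eq_card hQ]
    simp [two_mul]
end
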